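/- arXiv:2605.20515 — 6 statements merged into one kernel-verified Lean document; each statement's English description precedes it below -/
import Mathlib

section
/- In online conformal prediction with ideal feedback, where the threshold is updated as r_{t+1} = r_t - η(α - e_t) with e_t = 1{r_t < s_t}, scores s_t ∈ [0, B], learning rate η > 0, and initial threshold r_1 ∈ [0, B], the empirical miscoverage satisfies |α - (1/T) Σ_{t=1}^T e_t| ≤ (B + η)/(η T). -/
/-!
The threshold `r t` never leaves the interval `[-α η, B + (1 - α) η]`, of length `B + η`:
it only rises after a miscoverage, i.e. from below a score `s t ≤ B`, and only falls after a
coverage, i.e. from above a score `s t ≥ 0`. Telescoping the recursion gives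
`r 1 - r (T + 1) = η (T α - ∑ e t)`, so the miscoverage gap is at most `(B + η) / (η T)`.
-/

open Finset Set

namespace OnlineConformal

theorem update_mem_Icc {B η α s r : ℝ} (hη : 0 ≤ η) (hα : α ∈ Icc (0 : ℝ) 1)
    (hs : s ∈ Icc (0 : ℝ) B) (hr : r ∈ Icc (-(α * η)) (B + (1 - α) * η)) :
    r - η * (α - (if r < s then (1 : ℝ) else 0)) ∈ Icc (-(α * η)) (B + (1 - α) * η) := by
  obtain ⟨hα0, hα1⟩ := hα
  obtain ⟨hs0, hsB⟩ := hs
  obtain ⟨hr0, hrB⟩ := hr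
  split_ifs
  · exact ⟨by nlinarith, by nlinarith⟩
  · exact ⟨by nlinarith, by nlinarith⟩

theorem sub_eq_mul_sum_of_recursion {η α : ℝ} {r e : ℕ → ℝ}
    (hrec : ∀ t, 1 ≤ t → r (t + 1) = r t - η * (α - e t)) (n : ℕ) :
    r 1 - r (n + 1) = η * (n * α - ∑ t ∈ Icc 1 n, e t) := by
  induction n with
  | zero => simp
  | succ n ih =>
    rw [hrec (n + 1) (by omega), sum_Icc_succ_top (by omega)]
    push_cast
    linarith

theorem mem_Icc_of_recursion {B η α : ℝ} {s r : ℕ → ℝ} (hη : 0 ≤ η)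
    (hα : α ∈ Icc (0 : ℝ) 1) (hs : ∀ t, s t ∈ Icc (0 : ℝ) B)
    (hr1 : r 1 ∈ Icc (0 : ℝ) B)
    (hrec : ∀ t, 1 ≤ t →
      r (t + 1) = r t - η * (α - (if r t < s t then (1 : ℝ) else 0)))
    {t : ℕ} (ht : 1 ≤ t) : r t ∈ Icc (-(α * η)) (B + (1 - α) * η) := by
  induction t, ht using Nat.le_induction with
  | base =>
    have hlo : 0 ≤ α * η := mul_nonneg hα.1 hη
    have hhi : 0 ≤ (1 - α) * η := mul_nonneg (sub_nonneg.2 hα.2) hη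
    exact ⟨by linarith [hr1.1], by linarith [hr1.2]⟩
  | succ t ht ih => rw [hrec t ht]; exact update_mem_Icc hη hα (hs t) ih

end OnlineConformal

theorem ocp_ideal_miscoverage_general
    (B η α : ℝ) (T : ℕ) (s r : ℕ → ℝ)
    (hη : 0 < η) (hα : α ∈ Set.Icc (0 : ℝ) 1) (hT : 1 ≤ T)
    (hs : ∀ t, s t ∈ Set.Icc (0 : ℝ) B)
    (hr1 : r 1 ∈ Set.Icc (0 : ℝ) B)
    (hrec : ∀ t, 1 ≤ t →
      r (t + 1) = r t - η * (α - (if r t < s t then (1 : ℝ) else 0))) :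
    |α - (1 / (T : ℝ)) * ∑ t ∈ Finset.Icc 1 T, (if r t < s t then (1 : ℝ) else 0)|
      ≤ (B + η) / (η * T) := by
  have hηT : 0 < η * T := mul_pos hη (by exact_mod_cast hT)
  have hgap : α - (1 / (T : ℝ)) * ∑ t ∈ Icc 1 T, (if r t < s t then (1 : ℝ) else 0)
      = (r 1 - r (T + 1)) / (η * T) := by
    rw [OnlineConformal.sub_eq_mul_sum_of_recursion hrec T]
    field_simp
  have hdist : |r 1 - r (T + 1)| ≤ B + η := by
    have := Real.dist_le_of_mem_Icc
      (OnlineConformal.mem_Icc_of_recursion hη.le hα hs hr1 hrec le_rfl)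
      (OnlineConformal.mem_Icc_of_recursion hη.le hα hs hr1 hrec (Nat.le_add_left 1 T))
    rw [Real.dist_eq] at this
    linarith
  rw [hgap, abs_div, abs_of_pos hηT]
  gcongr

/-- OCP with ideal feedback achieves empirical miscoverage
bounded by (B + η)/(η T). -/
theorem ocp_ideal_miscoverage
    (B η α : ℝ) (T : ℕ) (s r : ℕ → ℝ)
    (hB : 0 < B) (hη : 0 < η) (hα : α ∈ Set.Icc (0 : ℝ) 1) (hT : 1 ≤ T)
    (hs : ∀ t, s t ∈ Set.Icc (0 : ℝ) B)
    (hr1 : r 1 ∈ Set.Icc (0 : ℝ) B)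
    (hrec : ∀ t, 1 ≤ t →
      r (t + 1) = r t - η * (α - (if r t < s t then (1 : ℝ) else 0))) :
    |α - (1 / (T : ℝ)) * ∑ t ∈ Finset.Icc 1 T, (if r t < s t then (1 : ℝ) else 0)|
      ≤ (B + η) / (η * T) :=
  ocp_ideal_miscoverage_general B η α T s r hη hα hT hs hr1 hrec
end

section
/- In online conformal prediction with ideal feedback (update r_{t+1} = r_t - η(α - e_t), e_t = 1{r_t < s_t}, s_t ∈ [0,B], r_1 ∈ [0,B]), the threshold iterates are uniformly bounded: -η α ≤ r_t ≤ B + η(1 - α) for all t ≥ 1. -/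
/-- OCP with ideal feedback has uniformly bounded threshold iterates:
-η α ≤ r_t ≤ B + η (1 - α) for all t ≥ 1. -/
theorem ocp_ideal_threshold_bounded
    (B η α : ℝ) (s r : ℕ → ℝ)
    (hB : 0 < B) (hη : 0 < η) (hα : α ∈ Set.Icc (0 : ℝ) 1)
    (hs : ∀ t, s t ∈ Set.Icc (0 : ℝ) B)
    (hr1 : r 1 ∈ Set.Icc (0 : ℝ) B)
    (hrec : ∀ t, 1 ≤ t →
      r (t + 1) = r t - η * (α - (if r t < s t then (1 : ℝ) else 0))) :
    ∀ t, 1 ≤ t → -η * α ≤ r t ∧ r t ≤ B + η * (1 - α) := by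
  obtain ⟨hα0, hα1⟩ := hα
  intro t ht
  induction t, ht using Nat.le_induction with
  | base =>
    constructor
    · nlinarith [hr1.1]
    · nlinarith [hr1.2]
  | succ n hn ih =>
    obtain ⟨ihl, ihr⟩ := ih
    rw [hrec n hn]
    obtain ⟨hs0, hsB⟩ := hs n
    by_cases h : r n < s n <;> simp [h] <;> constructor <;> nlinarith
end

section
/- Consider OCP with corrupted feedback: at each round t, the update is r_{t+1} = r_t - η ḡ_t where ḡ_t ∈ {α, α-1}, the true gradient is g_t = α - 1{r_t < s_t}, scores s_t ∈ [0,B], and r_1 = 0. Let G_{0→1} be the number of rounds t ≤ T with g_t = α but ḡ_t = α - 1, and G_{1→0} the number of rounds with g_t = α - 1 but ḡ_t = α. Then for all t ≤ T+1, the threshold satisfies -ηα(1 + G_{1→0}) ≤ r_t ≤ B + η(1-α)(1 + G_{0→1}). -/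
set_option maxHeartbeats 1000000


/-- Lemma A.1: under corrupted feedback, the OCP threshold satisfies
-ηα(1 + G_{1→0}) ≤ r_t ≤ B + η(1-α)(1 + G_{0→1}) for all 1 ≤ t ≤ T+1. -/
theorem ocp_corrupted_threshold_bounded
    (B η α : ℝ) (T : ℕ) (s r g gbar : ℕ → ℝ)
    (hB : 0 < B) (hη : 0 < η) (hα : α ∈ Set.Icc (0 : ℝ) 1)
    (hs : ∀ t, s t ∈ Set.Icc (0 : ℝ) B)
    (hg : ∀ t, g t = α - (if r t < s t then (1 : ℝ) else 0))
    (hgbar : ∀ t, gbar t = α ∨ gbar t = α - 1)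
    (hr1 : r 1 = 0)
    (hrec : ∀ t, 1 ≤ t → r (t + 1) = r t - η * gbar t) :
    ∀ t, 1 ≤ t → t ≤ T + 1 →
      -η * α * (1 + (((Finset.Icc 1 T).filter
          (fun u => g u = α - 1 ∧ gbar u = α)).card : ℝ)) ≤ r t ∧
      r t ≤ B + η * (1 - α) * (1 + (((Finset.Icc 1 T).filter
          (fun u => g u = α ∧ gbar u = α - 1)).card : ℝ)) := by
  obtain ⟨hα0, hα1⟩ := hα
  have hηα : (0:ℝ) ≤ η * α := mul_nonneg hη.le hα0
  have hη1α : (0:ℝ) ≤ η * (1 - α) := mul_nonneg hη.le (by linarith)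
  have bump : ∀ (p : ℕ → Prop) [DecidablePred p] (t : ℕ), 1 ≤ t → p t →
      ((Finset.Icc 1 (t-1)).filter p).card + 1 ≤ ((Finset.Icc 1 t).filter p).card := by
    intro p _ t ht hp
    have hnot : t ∉ (Finset.Icc 1 (t-1)).filter p := by
      simp only [Finset.mem_filter, Finset.mem_Icc]
      rintro ⟨⟨-, h⟩, -⟩; omega
    have hsub : insert t ((Finset.Icc 1 (t-1)).filter p) ⊆ (Finset.Icc 1 t).filter p := by
      intro x hx
      rcases Finset.mem_insert.mp hx with rfl | hx
      · simp only [Finset.mem_filter, Finset.mem_Icc]; exact ⟨⟨ht, le_refl _⟩, hp⟩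
      · simp only [Finset.mem_filter, Finset.mem_Icc] at hx ⊢
        exact ⟨⟨hx.1.1, hx.1.2.trans (Nat.sub_le t 1)⟩, hx.2⟩
    calc ((Finset.Icc 1 (t-1)).filter p).card + 1
        = (insert t ((Finset.Icc 1 (t-1)).filter p)).card :=
          (Finset.card_insert_of_notMem hnot).symm
      _ ≤ ((Finset.Icc 1 t).filter p).card := Finset.card_le_card hsub
  have mono : ∀ (p : ℕ → Prop) [DecidablePred p] (a b : ℕ), a ≤ b →
      ((Finset.Icc 1 a).filter p).card ≤ ((Finset.Icc 1 b).filter p).card := by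
    intro p _ a b hab
    exact Finset.card_le_card
      (Finset.filter_subset_filter _ (Finset.Icc_subset_Icc_right hab))
  have key : ∀ t, 1 ≤ t →
      -η * α * (1 + (((Finset.Icc 1 (t-1)).filter
          (fun u => g u = α - 1 ∧ gbar u = α)).card : ℝ)) ≤ r t ∧
      r t ≤ B + η * (1 - α) * (1 + (((Finset.Icc 1 (t-1)).filter
          (fun u => g u = α ∧ gbar u = α - 1)).card : ℝ)) := by
    intro t ht
    induction t, ht using Nat.le_induction with
    | base =>
      have he : Finset.Icc 1 (1-1) = (∅ : Finset ℕ) := by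
        apply Finset.Icc_eq_empty; omega
      rw [hr1, he]
      simp only [Finset.filter_empty, Finset.card_empty, Nat.cast_zero]
      constructor
      · linarith
      · linarith
    | succ t ht ih =>
      have hrt1 : r (t + 1) = r t - η * gbar t := hrec t ht
      have hts : (t + 1) - 1 = t := by omega
      rw [hts]
      set a10 := (((Finset.Icc 1 (t-1)).filter
          (fun u => g u = α - 1 ∧ gbar u = α)).card : ℝ) with ha10
      set b10 := (((Finset.Icc 1 t).filter
          (fun u => g u = α - 1 ∧ gbar u = α)).card : ℝ) with hb10
      set a01 := (((Finset.Icc 1 (t-1)).filter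
          (fun u => g u = α ∧ gbar u = α - 1)).card : ℝ) with ha01
      set b01 := (((Finset.Icc 1 t).filter
          (fun u => g u = α ∧ gbar u = α - 1)).card : ℝ) with hb01
      have c10m : a10 ≤ b10 := by
        rw [ha10, hb10]; exact_mod_cast mono _ _ _ (Nat.sub_le t 1)
      have c01m : a01 ≤ b01 := by
        rw [ha01, hb01]; exact_mod_cast mono _ _ _ (Nat.sub_le t 1)
      have c10nn : (0:ℝ) ≤ b10 := by rw [hb10]; exact Nat.cast_nonneg _
      have c01nn : (0:ℝ) ≤ b01 := by rw [hb01]; exact Nat.cast_nonneg _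
      have a10nn : (0:ℝ) ≤ a10 := by rw [ha10]; exact Nat.cast_nonneg _
      have a01nn : (0:ℝ) ≤ a01 := by rw [ha01]; exact Nat.cast_nonneg _
      obtain ⟨hlo, hhi⟩ := ih
      constructor
      · -- lower bound
        by_cases h0 : 0 ≤ r t
        · rcases hgbar t with h | h
          · rw [hrt1, h]; linarith [mul_nonneg hηα c10nn]
          · rw [hrt1, h]; linarith [mul_nonneg hηα c10nn]
        · have hlt : r t < s t := lt_of_lt_of_le (not_le.mp h0) (hs t).1
          have hgt : g t = α - 1 := by rw [hg t, if_pos hlt]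
          rcases hgbar t with h | h
          · have hc : a10 + 1 ≤ b10 := by
              rw [ha10, hb10]
              exact_mod_cast bump (fun u => g u = α - 1 ∧ gbar u = α) t ht ⟨hgt, h⟩
            rw [hrt1, h]
            linarith [mul_nonneg hηα (by linarith : (0:ℝ) ≤ b10 - a10 - 1)]
          · rw [hrt1, h]
            linarith [mul_nonneg hηα (by linarith : (0:ℝ) ≤ b10 - a10)]
      · -- upper bound
        by_cases h0 : r t ≤ B
        · rcases hgbar t with h | h
          · rw [hrt1, h]; linarith [mul_nonneg hη1α c01nn]
          · rw [hrt1, h]; linarith [mul_nonneg hη1α c01nn]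
        · have hge : ¬ (r t < s t) := by
            push_neg; exact (hs t).2.trans (le_of_lt (not_le.mp h0))
          have hgt : g t = α := by rw [hg t, if_neg hge]; ring
          rcases hgbar t with h | h
          · rw [hrt1, h]
            linarith [mul_nonneg hη1α (by linarith : (0:ℝ) ≤ b01 - a01)]
          · have hc : a01 + 1 ≤ b01 := by
              rw [ha01, hb01]
              exact_mod_cast bump (fun u => g u = α ∧ gbar u = α - 1) t ht ⟨hgt, h⟩
            rw [hrt1, h]
            linarith [mul_nonneg hη1α (by linarith : (0:ℝ) ≤ b01 - a01 - 1)]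
  intro t ht htT
  obtain ⟨hlo, hhi⟩ := key t ht
  have h10 : (((Finset.Icc 1 (t-1)).filter
      (fun u => g u = α - 1 ∧ gbar u = α)).card : ℝ) ≤
      (((Finset.Icc 1 T).filter (fun u => g u = α - 1 ∧ gbar u = α)).card : ℝ) := by
    exact_mod_cast mono _ _ _ (by omega)
  have h01 : (((Finset.Icc 1 (t-1)).filter
      (fun u => g u = α ∧ gbar u = α - 1)).card : ℝ) ≤
      (((Finset.Icc 1 T).filter (fun u => g u = α ∧ gbar u = α - 1)).card : ℝ) := by
    exact_mod_cast mono _ _ _ (by omega)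
  constructor
  · linarith [mul_nonneg hηα (by linarith : (0:ℝ) ≤
      (((Finset.Icc 1 T).filter (fun u => g u = α - 1 ∧ gbar u = α)).card : ℝ) -
      (((Finset.Icc 1 (t-1)).filter (fun u => g u = α - 1 ∧ gbar u = α)).card : ℝ))]
  · linarith [mul_nonneg hη1α (by linarith : (0:ℝ) ≤
      (((Finset.Icc 1 T).filter (fun u => g u = α ∧ gbar u = α - 1)).card : ℝ) -
      (((Finset.Icc 1 (t-1)).filter (fun u => g u = α ∧ gbar u = α - 1)).card : ℝ))]
end

section
/- Under OCP with corrupted feedback (update r_{t+1} = r_t - η ḡ_t with ḡ_t ∈ {α, α-1}, true gradient g_t = α - 1{r_t < s_t}, s_t ∈ [0,B], r_1 = 0), the empirical miscoverage satisfies |α - (1/T) Σ_{t=1}^T 1{r_t < s_t}| ≤ (B + η)/(η T) + |G_{0→1} - G_{1→0}|/T + max{α G_{1→0}, (1-α) G_{0→1}}/T, where G_{0→1} (resp. G_{1→0}) counts rounds where the gradient is flipped from α to α-1 (resp. from α-1 to α). -/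
/-!
Unrolling the update gives `r (T+1) = -η ∑ ḡ_t`, and `ḡ_t - g_t` is `+1` on a `1 → 0` flip,
`-1` on a `0 → 1` flip and `0` otherwise, so `T α - ∑ 1{r_t < s_t} = ∑ g_t = -r (T+1) / η + G₀₁ - G₁₀`.
It remains to bound `|r (T+1)|`. The iterate rises (by `η (1 - α)`) only when `ḡ_t = α - 1`, which
for an uncorrupted round means `r_t < s_t ≤ B`; hence it exceeds `B + η (1 - α)` only through
`0 → 1` flips. Symmetrically it falls below `-η α` only through `1 → 0` flips.
-/

open Finset

lemma le_add_mul_one_add_card_filter {x : ℕ → ℝ} {c d : ℝ} (P : ℕ → Prop) [DecidablePred P]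
    (hd : 0 ≤ d) (h1 : x 1 ≤ c + d)
    (hstep : ∀ t, 1 ≤ t → x (t + 1) ≤ x t ∨ (x (t + 1) ≤ x t + d ∧ (x t ≤ c ∨ P t))) (n : ℕ) :
    x (n + 1) ≤ c + d * (1 + #{t ∈ Icc 1 n | P t}) := by
  induction n with
  | zero => simpa using h1
  | succ n ih =>
    have hcount : (#{t ∈ Icc 1 (n + 1) | P t} : ℝ)
        = #{t ∈ Icc 1 n | P t} + if P (n + 1) then 1 else 0 := by
      simp only [natCast_card_filter]
      exact sum_Icc_succ_top (by omega) _
    have hcount0 : (0 : ℝ) ≤ #{t ∈ Icc 1 n | P t} := Nat.cast_nonneg _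
    rw [hcount]
    rcases hstep (n + 1) (by omega) with hdec | ⟨hinc, hle | hP⟩
    · have : 0 ≤ d * if P (n + 1) then 1 else 0 := by positivity
      nlinarith
    · have : 0 ≤ d * (#{t ∈ Icc 1 n | P t} + if P (n + 1) then 1 else 0) := by positivity
      nlinarith
    · rw [if_pos hP]
      nlinarith

lemma eq_sub_mul_sum_Icc_of_recursion {r gbar : ℕ → ℝ} {η : ℝ}
    (hrec : ∀ t, 1 ≤ t → r (t + 1) = r t - η * gbar t) (n : ℕ) :
    r (n + 1) = r 1 - η * ∑ t ∈ Icc 1 n, gbar t := by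
  induction n with
  | zero => simp
  | succ n ih =>
    rw [hrec (n + 1) (by omega), sum_Icc_succ_top (by omega), ih]
    ring

lemma sum_eq_sum_add_card_filter_sub_card_filter {S : Finset ℕ} {a : ℝ} {x y : ℕ → ℝ}
    (hx : ∀ t ∈ S, x t = a ∨ x t = a - 1) (hy : ∀ t ∈ S, y t = a ∨ y t = a - 1) :
    ∑ t ∈ S, y t = ∑ t ∈ S, x t + #{t ∈ S | x t = a - 1 ∧ y t = a}
      - #{t ∈ S | x t = a ∧ y t = a - 1} := by
  simp only [natCast_card_filter, ← sum_add_distrib, ← sum_sub_distrib]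
  refine sum_congr rfl fun t ht => ?_
  rcases hx t ht with h | h <;> rcases hy t ht with h' | h' <;> simp [h, h']

section CorruptedOCP

variable {B η α : ℝ} {s r g gbar : ℕ → ℝ}

lemma corrupted_step_up (hη : 0 ≤ η) (hα : 0 ≤ α) (t : ℕ) (hst : s t ≤ B)
    (hg : g t = α - (if r t < s t then (1 : ℝ) else 0)) (hgbar : gbar t = α ∨ gbar t = α - 1)
    (hrec : r (t + 1) = r t - η * gbar t) :
    r (t + 1) ≤ r t ∨
      (r (t + 1) ≤ r t + η * (1 - α) ∧ (r t ≤ B ∨ (g t = α ∧ gbar t = α - 1))) := by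
  rcases hgbar with h | h
  · left
    rw [hrec, h]
    nlinarith
  · refine Or.inr ⟨by rw [hrec, h]; linarith, ?_⟩
    by_cases hrs : r t < s t
    · exact Or.inl (hrs.le.trans hst)
    · exact Or.inr ⟨by simp [hg, hrs], h⟩

lemma corrupted_step_down (hη : 0 ≤ η) (hα : α ≤ 1) (t : ℕ) (hst : 0 ≤ s t)
    (hg : g t = α - (if r t < s t then (1 : ℝ) else 0)) (hgbar : gbar t = α ∨ gbar t = α - 1)
    (hrec : r (t + 1) = r t - η * gbar t) :
    -r (t + 1) ≤ -r t ∨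
      (-r (t + 1) ≤ -r t + η * α ∧ (-r t ≤ 0 ∨ (g t = α - 1 ∧ gbar t = α))) := by
  rcases hgbar with h | h
  · refine Or.inr ⟨by rw [hrec, h]; linarith, ?_⟩
    by_cases hrs : r t < s t
    · exact Or.inr ⟨by simp [hg, hrs], h⟩
    · exact Or.inl (by linarith [not_lt.mp hrs])
  · left
    rw [hrec, h]
    nlinarith

lemma natCast_mul_sub_sum_eq_of_corrupted (hη : η ≠ 0)
    (hg : ∀ t, g t = α - (if r t < s t then (1 : ℝ) else 0))
    (hgbar : ∀ t, gbar t = α ∨ gbar t = α - 1) (hr1 : r 1 = 0)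
    (hrec : ∀ t, 1 ≤ t → r (t + 1) = r t - η * gbar t) (T : ℕ) :
    T * α - ∑ t ∈ Icc 1 T, (if r t < s t then (1 : ℝ) else 0)
      = -r (T + 1) / η + (#{t ∈ Icc 1 T | g t = α ∧ gbar t = α - 1}
        - #{t ∈ Icc 1 T | g t = α - 1 ∧ gbar t = α}) := by
  have hsum_g :
      ∑ t ∈ Icc 1 T, g t = T * α - ∑ t ∈ Icc 1 T, (if r t < s t then (1 : ℝ) else 0) := by
    simp [sum_congr rfl fun t _ => hg t, sum_sub_distrib, mul_comm]
  have hsum_gbar := sum_eq_sum_add_card_filter_sub_card_filter (S := Icc 1 T) (x := g)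
    (fun t _ => by rw [hg t]; split_ifs <;> simp) (fun t _ => hgbar t)
  have hunroll := eq_sub_mul_sum_Icc_of_recursion hrec T
  rw [hr1] at hunroll
  rw [← hsum_g, hunroll, hsum_gbar]
  field_simp
  ring

variable (hη : 0 < η) (hα : α ∈ Set.Icc (0 : ℝ) 1) (hs : ∀ t, s t ∈ Set.Icc (0 : ℝ) B)
  (hg : ∀ t, g t = α - (if r t < s t then (1 : ℝ) else 0))
  (hgbar : ∀ t, gbar t = α ∨ gbar t = α - 1) (hr1 : r 1 = 0)
  (hrec : ∀ t, 1 ≤ t → r (t + 1) = r t - η * gbar t)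
include hη hα hs hg hgbar hr1 hrec

lemma corrupted_iterate_le (n : ℕ) :
    r (n + 1) ≤ B + η * (1 - α) * (1 + #{t ∈ Icc 1 n | g t = α ∧ gbar t = α - 1}) :=
  le_add_mul_one_add_card_filter _ (mul_nonneg hη.le (by linarith [hα.2]))
    (by rw [hr1]; nlinarith [(hs 1).1.trans (hs 1).2, hα.2])
    (fun t ht => corrupted_step_up hη.le hα.1 t (hs t).2 (hg t) (hgbar t) (hrec t ht)) n

lemma neg_corrupted_iterate_le (n : ℕ) :
    -r (n + 1) ≤ η * α * (1 + #{t ∈ Icc 1 n | g t = α - 1 ∧ gbar t = α}) := by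
  simpa using le_add_mul_one_add_card_filter (x := fun t => -r t) (c := 0) _
    (mul_nonneg hη.le hα.1) (by rw [hr1]; nlinarith [hα.1])
    (fun t ht => corrupted_step_down hη.le hα.2 t (hs t).1 (hg t) (hgbar t) (hrec t ht)) n

end CorruptedOCP

theorem ocp_corrupted_miscoverage_general
    (B η α : ℝ) (T : ℕ) (s r g gbar : ℕ → ℝ)
    (hη : 0 < η) (hα : α ∈ Set.Icc (0 : ℝ) 1) (hT : 1 ≤ T)
    (hs : ∀ t, s t ∈ Set.Icc (0 : ℝ) B)
    (hg : ∀ t, g t = α - (if r t < s t then (1 : ℝ) else 0))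
    (hgbar : ∀ t, gbar t = α ∨ gbar t = α - 1)
    (hr1 : r 1 = 0)
    (hrec : ∀ t, 1 ≤ t → r (t + 1) = r t - η * gbar t) :
    |α - (1 / (T : ℝ)) * ∑ t ∈ Finset.Icc 1 T, (if r t < s t then (1 : ℝ) else 0)|
      ≤ (B + η) / (η * T)
        + |(((Finset.Icc 1 T).filter (fun u => g u = α ∧ gbar u = α - 1)).card : ℝ)
            - (((Finset.Icc 1 T).filter (fun u => g u = α - 1 ∧ gbar u = α)).card : ℝ)|
            / T
        + max (α * (((Finset.Icc 1 T).filter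
              (fun u => g u = α - 1 ∧ gbar u = α)).card : ℝ))
            ((1 - α) * (((Finset.Icc 1 T).filter
              (fun u => g u = α ∧ gbar u = α - 1)).card : ℝ)) / T := by
  have hT0 : (0 : ℝ) < T := by exact_mod_cast hT
  have hB : 0 ≤ B := (hs 1).1.trans (hs 1).2
  have hident := natCast_mul_sub_sum_eq_of_corrupted hη.ne' hg hgbar hr1 hrec T
  have hup := corrupted_iterate_le hη hα hs hg hgbar hr1 hrec T
  have hdown := neg_corrupted_iterate_le hη hα hs hg hgbar hr1 hrec T
  set N₀₁ : ℝ := ((#{t ∈ Icc 1 T | g t = α ∧ gbar t = α - 1} : ℕ) : ℝ)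
  set N₁₀ : ℝ := ((#{t ∈ Icc 1 T | g t = α - 1 ∧ gbar t = α} : ℕ) : ℝ)
  set M := max (α * N₁₀) ((1 - α) * N₀₁)
  have hiterate : |r (T + 1)| / η ≤ (B + η) / η + M := by
    rw [div_le_iff₀ hη, add_mul, div_mul_cancel₀ _ hη.ne', abs_le]
    have : η * (α * N₁₀) ≤ η * M := by gcongr; exact le_max_left _ _
    have : η * ((1 - α) * N₀₁) ≤ η * M := by gcongr; exact le_max_right _ _
    have : η * α ≤ η := mul_le_of_le_one_right hη.le hα.2
    constructor <;> nlinarith [hα.1]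
  have hscaled : |T * α - ∑ t ∈ Icc 1 T, (if r t < s t then (1 : ℝ) else 0)|
      ≤ (B + η) / η + |N₀₁ - N₁₀| + M := calc
    _ = |-r (T + 1) / η + (N₀₁ - N₁₀)| := by rw [hident]
    _ ≤ |r (T + 1)| / η + |N₀₁ - N₁₀| := by
      simpa [abs_div, abs_of_pos hη] using abs_add_le (-r (T + 1) / η) (N₀₁ - N₁₀)
    _ ≤ _ := by linarith
  have hmiscoverage : α - 1 / T * ∑ t ∈ Icc 1 T, (if r t < s t then (1 : ℝ) else 0)
      = (T * α - ∑ t ∈ Icc 1 T, (if r t < s t then (1 : ℝ) else 0)) / T := by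
    field_simp
  rw [hmiscoverage, abs_div, abs_of_pos hT0, ← div_div, ← add_div, ← add_div]
  gcongr

/-- Theorem 1: miscoverage of OCP under corrupted feedback. -/
theorem ocp_corrupted_miscoverage
    (B η α : ℝ) (T : ℕ) (s r g gbar : ℕ → ℝ)
    (hB : 0 < B) (hη : 0 < η) (hα : α ∈ Set.Icc (0 : ℝ) 1) (hT : 1 ≤ T)
    (hs : ∀ t, s t ∈ Set.Icc (0 : ℝ) B)
    (hg : ∀ t, g t = α - (if r t < s t then (1 : ℝ) else 0))
    (hgbar : ∀ t, gbar t = α ∨ gbar t = α - 1)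
    (hr1 : r 1 = 0)
    (hrec : ∀ t, 1 ≤ t → r (t + 1) = r t - η * gbar t) :
    |α - (1 / (T : ℝ)) * ∑ t ∈ Finset.Icc 1 T, (if r t < s t then (1 : ℝ) else 0)|
      ≤ (B + η) / (η * T)
        + |(((Finset.Icc 1 T).filter (fun u => g u = α ∧ gbar u = α - 1)).card : ℝ)
            - (((Finset.Icc 1 T).filter (fun u => g u = α - 1 ∧ gbar u = α)).card : ℝ)|
            / T
        + max (α * (((Finset.Icc 1 T).filter
              (fun u => g u = α - 1 ∧ gbar u = α)).card : ℝ))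
            ((1 - α) * (((Finset.Icc 1 T).filter
              (fun u => g u = α ∧ gbar u = α - 1)).card : ℝ)) / T :=
  ocp_corrupted_miscoverage_general B η α T s r g gbar hη hα hT hs hg hgbar hr1 hrec
end

section
/- In F-ROCP (filtered robust OCP), where the threshold is updated by r_{t+1} = r_t - η g_t with the true gradient g_t = α - 1{r_t < s_t} whenever r_t ∉ [0, B), and by r_{t+1} = r_t - η ḡ_t with arbitrary ḡ_t ∈ {α, α-1} whenever r_t ∈ [0, B), starting from r_1 ∈ [0, B) with scores s_t ∈ [0,B], the empirical miscoverage satisfies |α - (1/T) Σ_{t=1}^T 1{r_t < s_t}| ≤ (B + η)/(η T) + |G̃_{0→1} - G̃_{1→0}|/T, where G̃_{0→1} and G̃_{1→0} count the directional gradient flips only over rounds with r_t ∈ [0, B). -/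
/-!
Unrolling the update gives `η ∑ₜ dₜ = r₁ - r_{T+1}` for the gradients `dₜ` actually applied, and
these differ from the true gradients exactly on the in-range rounds where a flip occurred, by
`G̃_{0→1} - G̃_{1→0}` in total. Since `∑ₜ gₜ = T (α - miscoverage)`, it remains to bound the drift
`|r₁ - r_{T+1}| ≤ B + η`: the iterates stay in `[-η, B + η)`, because one step moves by at most `η`
and outside `[0, B)` the true gradient, which is always applied there, points back towards `[0, B)`.
-/

open Finset

theorem mul_sum_Icc_eq_sub_of_step {η : ℝ} {r d : ℕ → ℝ}
    (hstep : ∀ t, 1 ≤ t → r (t + 1) = r t - η * d t) (T : ℕ) :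
    η * ∑ t ∈ Icc 1 T, d t = r 1 - r (T + 1) := by
  induction T with
  | zero => simp
  | succ T ih =>
    rw [sum_Icc_succ_top (by omega), mul_add, ih, hstep (T + 1) (by omega)]
    ring

theorem sub_mul_mem_Ico_of_mem_Ico {B η α x d : ℝ} (hη : 0 ≤ η)
    (hα : α ∈ Set.Icc (0 : ℝ) 1) (hd : d = α ∨ d = α - 1)
    (hlo : x < 0 → d = α - 1) (hhi : B ≤ x → d = α) (hx : x ∈ Set.Ico (-η) (B + η)) :
    x - η * d ∈ Set.Ico (-η) (B + η) := by
  obtain ⟨hα0, hα1⟩ := hα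
  obtain ⟨hxl, hxu⟩ := hx
  have hηα : 0 ≤ η * α := mul_nonneg hη hα0
  have hηα' : η * α ≤ η := mul_le_of_le_one_right hη hα1
  rcases hd with rfl | rfl
  · have : 0 ≤ x := not_lt.mp fun h => by linarith [hlo h]
    constructor <;> linarith
  · have : x < B := not_le.mp fun h => by linarith [hhi h]
    constructor <;> linarith [mul_sub η α 1]

theorem mem_Ico_of_step {B η α : ℝ} {r d : ℕ → ℝ} (hη : 0 ≤ η) (hα : α ∈ Set.Icc (0 : ℝ) 1)
    (hd : ∀ t, d t = α ∨ d t = α - 1) (hlo : ∀ t, r t < 0 → d t = α - 1)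
    (hhi : ∀ t, B ≤ r t → d t = α) (hr1 : r 1 ∈ Set.Ico (-η) (B + η))
    (hstep : ∀ t, 1 ≤ t → r (t + 1) = r t - η * d t) :
    ∀ t, 1 ≤ t → r t ∈ Set.Ico (-η) (B + η) := by
  intro t ht
  induction t, ht using Nat.le_induction with
  | base => exact hr1
  | succ t ht ih =>
    rw [hstep t ht]
    exact sub_mul_mem_Ico_of_mem_Ico hη hα (hd t) (hlo t) (hhi t) ih

theorem sum_eq_card_filter_sub_card_filter {ι : Type*} (s : Finset ι) (f : ι → ℝ)
    (hf : ∀ i ∈ s, f i = 1 ∨ f i = 0 ∨ f i = -1) :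
    ∑ i ∈ s, f i = (#{i ∈ s | f i = 1} : ℝ) - #{i ∈ s | f i = -1} := by
  rw [← sum_boole, ← sum_boole, ← sum_sub_distrib]
  refine sum_congr rfl fun i hi => ?_
  rcases hf i hi with h | h | h <;> norm_num [h]

noncomputable def appliedGrad (B : ℝ) (r g gbar : ℕ → ℝ) (t : ℕ) : ℝ :=
  if 0 ≤ r t ∧ r t < B then gbar t else g t

theorem frocp_step {B η : ℝ} {r g gbar : ℕ → ℝ}
    (hrec : ∀ t, 1 ≤ t →
      r (t + 1) = if 0 ≤ r t ∧ r t < B then r t - η * gbar t else r t - η * g t) :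
    ∀ t, 1 ≤ t → r (t + 1) = r t - η * appliedGrad B r g gbar t := fun t ht => by
  rw [hrec t ht, appliedGrad]
  split_ifs <;> rfl

theorem frocp_iterate_mem_Ico {B η α : ℝ} {s r g gbar : ℕ → ℝ} (hη : 0 ≤ η)
    (hα : α ∈ Set.Icc (0 : ℝ) 1) (hs : ∀ t, s t ∈ Set.Icc (0 : ℝ) B)
    (hg : ∀ t, g t = α - (if r t < s t then (1 : ℝ) else 0))
    (hgbar : ∀ t, gbar t = α ∨ gbar t = α - 1) (hr1 : 0 ≤ r 1 ∧ r 1 < B)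
    (hstep : ∀ t, 1 ≤ t → r (t + 1) = r t - η * appliedGrad B r g gbar t) :
    ∀ t, 1 ≤ t → r t ∈ Set.Ico (-η) (B + η) := by
  refine mem_Ico_of_step hη hα (fun t => ?_) (fun t ht => ?_) (fun t ht => ?_)
    ⟨by linarith [hr1.1], by linarith [hr1.2]⟩ hstep
  · rw [appliedGrad]
    split_ifs
    · exact hgbar t
    · rw [hg t]; split_ifs <;> simp
  · have : r t < s t := ht.trans_le (hs t).1
    simp [appliedGrad, hg t, this, ht.not_ge]
  · have : ¬ r t < s t := not_lt.mpr ((hs t).2.trans ht)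
    simp [appliedGrad, hg t, this, ht.not_gt]

theorem sum_sub_appliedGrad {B α : ℝ} {r g gbar : ℕ → ℝ} (hg : ∀ t, g t = α ∨ g t = α - 1)
    (hgbar : ∀ t, gbar t = α ∨ gbar t = α - 1) (S : Finset ℕ) :
    ∑ t ∈ S, (g t - appliedGrad B r g gbar t) =
      (#{u ∈ S | (0 ≤ r u ∧ r u < B) ∧ g u - gbar u = 1} : ℝ)
        - #{u ∈ S | (0 ≤ r u ∧ r u < B) ∧ g u - gbar u = -1} := by
  have hflip : ∀ t, g t - appliedGrad B r g gbar t =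
      if 0 ≤ r t ∧ r t < B then g t - gbar t else 0 := fun t => by
    rw [appliedGrad]; split_ifs <;> ring
  simp only [hflip, ← sum_filter]
  rw [sum_eq_card_filter_sub_card_filter _ _ fun t _ => ?_, filter_filter, filter_filter]
  rcases hg t with h | h <;> rcases hgbar t with h' | h' <;> norm_num [h, h']

theorem sub_one_div_mul_sum_Icc {α : ℝ} {T : ℕ} (hT : 1 ≤ T) (x : ℕ → ℝ) :
    α - 1 / (T : ℝ) * ∑ t ∈ Icc 1 T, x t = 1 / (T : ℝ) * ∑ t ∈ Icc 1 T, (α - x t) := by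
  have hT0 : (T : ℝ) ≠ 0 := by positivity
  rw [sum_sub_distrib, sum_const, Nat.card_Icc, Nat.add_sub_cancel, nsmul_eq_mul]
  field_simp

theorem frocp_miscoverage_general
    (B η α : ℝ) (T : ℕ) (s r g gbar : ℕ → ℝ)
    (hη : 0 < η) (hα : α ∈ Set.Icc (0 : ℝ) 1) (hT : 1 ≤ T)
    (hs : ∀ t, s t ∈ Set.Icc (0 : ℝ) B)
    (hg : ∀ t, g t = α - (if r t < s t then (1 : ℝ) else 0))
    (hgbar : ∀ t, gbar t = α ∨ gbar t = α - 1)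
    (hr1 : 0 ≤ r 1 ∧ r 1 < B)
    (hrec : ∀ t, 1 ≤ t →
      r (t + 1) = if 0 ≤ r t ∧ r t < B then r t - η * gbar t else r t - η * g t) :
    |α - (1 / (T : ℝ)) * ∑ t ∈ Finset.Icc 1 T, (if r t < s t then (1 : ℝ) else 0)|
      ≤ (B + η) / (η * T)
        + |(((Finset.Icc 1 T).filter
              (fun u => (0 ≤ r u ∧ r u < B) ∧ g u - gbar u = 1)).card : ℝ)
            - (((Finset.Icc 1 T).filter
              (fun u => (0 ≤ r u ∧ r u < B) ∧ g u - gbar u = -1)).card : ℝ)| / T := by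
  have hstep := frocp_step hrec
  have hdrift : |r 1 - r (T + 1)| ≤ B + η := by
    obtain ⟨hlo, hhi⟩ := frocp_iterate_mem_Ico hη.le hα hs hg hgbar hr1 hstep (T + 1) (by omega)
    rw [abs_le]; constructor <;> linarith [hr1.1, hr1.2]
  have hg' : ∀ t, g t = α ∨ g t = α - 1 := fun t => by rw [hg t]; split_ifs <;> simp
  have hT0 : (0 : ℝ) < T := by exact_mod_cast hT
  set c : ℝ := (#{u ∈ Icc 1 T | (0 ≤ r u ∧ r u < B) ∧ g u - gbar u = 1} : ℝ)
    - #{u ∈ Icc 1 T | (0 ≤ r u ∧ r u < B) ∧ g u - gbar u = -1}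
  have hident : α - 1 / (T : ℝ) * ∑ t ∈ Icc 1 T, (if r t < s t then (1 : ℝ) else 0) =
      (r 1 - r (T + 1)) / (η * T) + c / T := by
    have hsum : ∑ t ∈ Icc 1 T, (α - if r t < s t then (1 : ℝ) else 0) =
        ∑ t ∈ Icc 1 T, appliedGrad B r g gbar t + c := by
      simp only [← hg, c, ← sum_sub_appliedGrad hg' hgbar, ← sum_add_distrib, add_sub_cancel]
    rw [sub_one_div_mul_sum_Icc hT, hsum, ← mul_sum_Icc_eq_sub_of_step hstep T]
    field_simp
  rw [hident]
  calc |(r 1 - r (T + 1)) / (η * T) + c / T|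
      ≤ |r 1 - r (T + 1)| / (η * T) + |c| / T := by
        refine (abs_add_le _ _).trans_eq ?_
        rw [abs_div, abs_div, abs_of_pos hT0, abs_of_pos (mul_pos hη hT0)]
    _ ≤ (B + η) / (η * T) + |c| / T := by gcongr

/-- Theorem 2: miscoverage bound of F-ROCP, where the corrupted
gradient is used only when the threshold is in-range, and the true gradient
is used when it is out-of-range. -/
theorem frocp_miscoverage
    (B η α : ℝ) (T : ℕ) (s r g gbar : ℕ → ℝ)
    (hB : 0 < B) (hη : 0 < η) (hα : α ∈ Set.Icc (0 : ℝ) 1) (hT : 1 ≤ T)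
    (hs : ∀ t, s t ∈ Set.Icc (0 : ℝ) B)
    (hg : ∀ t, g t = α - (if r t < s t then (1 : ℝ) else 0))
    (hgbar : ∀ t, gbar t = α ∨ gbar t = α - 1)
    (hr1 : 0 ≤ r 1 ∧ r 1 < B)
    (hrec : ∀ t, 1 ≤ t →
      r (t + 1) = if 0 ≤ r t ∧ r t < B then r t - η * gbar t else r t - η * g t) :
    |α - (1 / (T : ℝ)) * ∑ t ∈ Finset.Icc 1 T, (if r t < s t then (1 : ℝ) else 0)|
      ≤ (B + η) / (η * T)
        + |(((Finset.Icc 1 T).filter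
              (fun u => (0 ≤ r u ∧ r u < B) ∧ g u - gbar u = 1)).card : ℝ)
            - (((Finset.Icc 1 T).filter
              (fun u => (0 ≤ r u ∧ r u < B) ∧ g u - gbar u = -1)).card : ℝ)| / T :=
  frocp_miscoverage_general B η α T s r g gbar hη hα hT hs hg hgbar hr1 hrec
end

section
/- Let z_1, …, z_T be i.i.d. Bernoulli(p) random variables. In the corrupted-feedback OCP setting where the number of feedback errors satisfies G_{0→1} + G_{1→0} = Σ_{t=1}^T z_t, the deterministic bound of Theorem 1 together with Hoeffding's inequality implies: with probability at least 1 - δ, the empirical miscoverage of OCP satisfies MisCov(T) ≤ (B+η)/(ηT) + 2(p + sqrt(log(1/δ)/(2T))). -/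
open MeasureTheory ProbabilityTheory

/-! Unrolling the recursion gives `η (∑ ē_t - α T) = r_{T+1}`. Without corruption the iterate
stays in `[-η, B + η]`; each corrupted feedback `z_t = 1` can push it one further step `η` out, so
`r_{T+1} ∈ [-η - η G, B + η + η G]` with `G = ∑ z_t`. Since `|ē_t - e_t| = z_t`, this gives
`T · MisCov(T) ≤ (B + η) / η + 2 G`, and Hoeffding's inequality for the independent Bernoulli
`z_t` bounds `G / T` by `p + √(log (1/δ) / (2T))` with probability at least `1 - δ`. -/

section Deterministic

variable {B η α : ℝ}

lemma ocp_step_lower {x s z c : ℝ} (hη : 0 ≤ η) (hα : α ≤ 1) (hs : 0 ≤ s) (hz : 0 ≤ z)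
    (hc : 0 ≤ c) (hx : -η - η * c ≤ x) :
    -η - η * (c + z) ≤ x - η * (α - |(if x < s then 1 else 0) - z|) := by
  by_cases hx0 : x < 0
  · have hbar : 1 - z ≤ |(if x < s then 1 else 0) - z| := by
      rw [if_pos (hx0.trans_le hs)]; exact le_abs_self _
    nlinarith [mul_le_mul_of_nonneg_left hbar hη, mul_le_mul_of_nonneg_left hα hη]
  · nlinarith [mul_nonneg hη (abs_nonneg ((if x < s then 1 else 0) - z)),
      mul_le_mul_of_nonneg_left hα hη, mul_nonneg hη (add_nonneg hc hz)]

lemma ocp_step_upper {x s z c : ℝ} (hη : 0 ≤ η) (hα : 0 ≤ α) (hs : s ≤ B) (hz : z ∈ Set.Icc 0 1)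
    (hc : 0 ≤ c) (hx : x ≤ B + η + η * c) :
    x - η * (α - |(if x < s then 1 else 0) - z|) ≤ B + η + η * (c + z) := by
  by_cases hxB : B ≤ x
  · have hbar : |(if x < s then 1 else 0) - z| = z := by
      rw [if_neg (hs.trans hxB).not_gt, zero_sub, abs_neg, abs_of_nonneg hz.1]
    rw [hbar]
    nlinarith [mul_nonneg hη hα]
  · have hbar : |(if x < s then 1 else 0) - z| ≤ 1 := by
      rw [abs_sub_le_iff]; split_ifs <;> constructor <;> linarith [hz.1, hz.2]
    nlinarith [mul_nonneg hη hα, mul_le_mul_of_nonneg_left hbar hη,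
      mul_nonneg hη (add_nonneg hc hz.1)]

variable {s z r e ebar g : ℕ → ℝ}

lemma ocp_iterate_eq (hrec : ∀ t, 1 ≤ t → r (t + 1) = r t - η * (α - g t)) (n : ℕ) :
    r (n + 1) = r 1 + η * (∑ t ∈ Finset.Icc 1 n, g t - α * n) := by
  induction n with
  | zero => simp
  | succ k ih =>
    rw [hrec (k + 1) (by omega), ih, Finset.sum_Icc_succ_top (by omega)]
    push_cast; ring

lemma ocp_iterate_mem_Icc (hη : 0 ≤ η) (hα : α ∈ Set.Icc 0 1) (hs : ∀ t, s t ∈ Set.Icc 0 B)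
    (hz : ∀ t, z t ∈ Set.Icc 0 1) (he : ∀ t, e t = if r t < s t then 1 else 0)
    (hebar : ∀ t, ebar t = |e t - z t|) (hr1 : r 1 ∈ Set.Icc (-η) (B + η))
    (hrec : ∀ t, 1 ≤ t → r (t + 1) = r t - η * (α - ebar t)) (n : ℕ) :
    r (n + 1) ∈ Set.Icc (-η - η * ∑ t ∈ Finset.Icc 1 n, z t)
      (B + η + η * ∑ t ∈ Finset.Icc 1 n, z t) := by
  induction n with
  | zero => simpa using hr1
  | succ k ih =>
    have hc : 0 ≤ ∑ t ∈ Finset.Icc 1 k, z t := Finset.sum_nonneg fun t _ => (hz t).1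
    rw [Finset.sum_Icc_succ_top (by omega), hrec (k + 1) (by omega), hebar, he]
    exact ⟨ocp_step_lower hη hα.2 (hs _).1 (hz _).1 hc ih.1,
      ocp_step_upper hη hα.1 (hs _).2 (hz _) hc ih.2⟩

lemma abs_abs_sub_sub_le {e z : ℝ} (he : 0 ≤ e) : |(|e - z| - e)| ≤ |z| := by
  simpa [abs_of_nonneg he] using abs_abs_sub_abs_le_abs_sub (e - z) e

lemma ocp_abs_mul_sub_sum_le (hη : 0 < η) (hα : α ∈ Set.Icc 0 1)
    (hs : ∀ t, s t ∈ Set.Icc 0 B) (hz : ∀ t, z t ∈ Set.Icc 0 1)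
    (he : ∀ t, e t = if r t < s t then 1 else 0) (hebar : ∀ t, ebar t = |e t - z t|)
    (hr1 : r 1 = 0) (hrec : ∀ t, 1 ≤ t → r (t + 1) = r t - η * (α - ebar t)) (T : ℕ) :
    |α * T - ∑ t ∈ Finset.Icc 1 T, e t| ≤ (B + η) / η + 2 * ∑ t ∈ Finset.Icc 1 T, z t := by
  have hB : 0 ≤ B := (hs 0).1.trans (hs 0).2
  have hbounds := ocp_iterate_mem_Icc hη.le hα hs hz he hebar
    (by rw [hr1]; constructor <;> linarith) hrec T
  rw [ocp_iterate_eq hrec, hr1, zero_add] at hbounds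
  set Z := ∑ t ∈ Finset.Icc 1 T, z t
  have hcorrupted : |∑ t ∈ Finset.Icc 1 T, ebar t - α * T| ≤ (B + η) / η + Z := by
    rw [abs_le, div_add' _ _ _ hη.ne', neg_le, le_div_iff₀ hη, le_div_iff₀ hη]
    constructor <;> nlinarith [hbounds.1, hbounds.2]
  have hfeedback : |∑ t ∈ Finset.Icc 1 T, ebar t - ∑ t ∈ Finset.Icc 1 T, e t| ≤ Z := by
    rw [← Finset.sum_sub_distrib]
    refine (Finset.abs_sum_le_sum_abs _ _).trans (Finset.sum_le_sum fun t _ => ?_)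
    have he0 : 0 ≤ e t := by rw [he]; split_ifs <;> norm_num
    simpa [hebar, abs_of_nonneg (hz t).1] using abs_abs_sub_sub_le (z := z t) he0
  calc |α * T - ∑ t ∈ Finset.Icc 1 T, e t|
      ≤ |∑ t ∈ Finset.Icc 1 T, ebar t - α * T|
        + |∑ t ∈ Finset.Icc 1 T, ebar t - ∑ t ∈ Finset.Icc 1 T, e t| := by
        rw [abs_sub_comm _ (α * T)]; exact abs_sub_le _ _ _
    _ ≤ (B + η) / η + 2 * Z := by linarith

lemma ocp_miscoverage_le (hη : 0 < η) (hα : α ∈ Set.Icc 0 1)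
    (hs : ∀ t, s t ∈ Set.Icc 0 B) (hz : ∀ t, z t ∈ Set.Icc 0 1)
    (he : ∀ t, e t = if r t < s t then 1 else 0) (hebar : ∀ t, ebar t = |e t - z t|)
    (hr1 : r 1 = 0) (hrec : ∀ t, 1 ≤ t → r (t + 1) = r t - η * (α - ebar t)) {T : ℕ}
    (hT : 0 < T) :
    |α - (1 / (T : ℝ)) * ∑ t ∈ Finset.Icc 1 T, e t|
      ≤ (B + η) / (η * T) + 2 * ((1 / (T : ℝ)) * ∑ t ∈ Finset.Icc 1 T, z t) := by
  have hT' : (0 : ℝ) < T := by exact_mod_cast hT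
  have h := ocp_abs_mul_sub_sum_le hη hα hs hz he hebar hr1 hrec T
  rw [show α - (1 / (T : ℝ)) * ∑ t ∈ Finset.Icc 1 T, e t
      = (α * T - ∑ t ∈ Finset.Icc 1 T, e t) / T by field_simp, abs_div, abs_of_pos hT',
    div_le_iff₀ hT']
  calc _ ≤ (B + η) / η + 2 * ∑ t ∈ Finset.Icc 1 T, z t := h
    _ = _ := by field_simp

end Deterministic

section Hoeffding

variable {Ω ι : Type*} [MeasurableSpace Ω] {μ : Measure Ω}

lemma integral_eq_measureReal_of_eq_zero_or_eq_one {f : Ω → ℝ} (hf : Measurable f)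
    (h01 : ∀ ω, f ω = 0 ∨ f ω = 1) : μ[f] = μ.real {ω | f ω = 1} := by
  have hf1 : f = Set.indicator (f ⁻¹' {1}) 1 := by
    funext ω; rcases h01 ω with h | h <;> simp [h]
  calc μ[f] = μ[Set.indicator (f ⁻¹' {1}) 1] := by rw [← hf1]
    _ = μ.real {ω | f ω = 1} := integral_indicator_one (hf (measurableSet_singleton 1))

variable [IsProbabilityMeasure μ]

lemma ofReal_one_sub_le_measure {s : Set Ω} {δ : ℝ} (hδ : 0 ≤ δ) (h : μ sᶜ ≤ ENNReal.ofReal δ) :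
    ENNReal.ofReal (1 - δ) ≤ μ s := by
  rw [ENNReal.ofReal_sub _ hδ, ENNReal.ofReal_one, tsub_le_iff_right]
  calc 1 = μ Set.univ := measure_univ.symm
    _ ≤ μ s + μ sᶜ := measure_univ_le_add_compl s
    _ ≤ μ s + ENNReal.ofReal δ := by gcongr

lemma measureReal_sum_sub_integral_ge_le {z : ι → Ω → ℝ} (hindep : iIndepFun z μ)
    (hmeas : ∀ i, AEMeasurable (z i) μ) {a b : ℝ}
    (hz : ∀ i, ∀ᵐ ω ∂μ, z i ω ∈ Set.Icc a b) (S : Finset ι) {ε : ℝ} (hε : 0 ≤ ε) :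
    μ.real {ω | ε ≤ ∑ i ∈ S, (z i ω - μ[z i])}
      ≤ Real.exp (-2 * ε ^ 2 / (S.card * (b - a) ^ 2)) := by
  have hcentered : iIndepFun (fun i ω => z i ω - μ[z i]) μ :=
    hindep.comp (fun i x => x - ∫ ω, z i ω ∂μ) fun i => measurable_sub_const _
  have h := HasSubgaussianMGF.measure_sum_ge_le_of_iIndepFun hcentered (s := S)
    (fun i _ => hasSubgaussianMGF_of_mem_Icc (hmeas i) (hz i)) hε
  refine h.trans_eq (congrArg Real.exp ?_)
  rw [Finset.sum_const, nsmul_eq_mul]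
  push_cast
  rw [Real.norm_eq_abs, div_pow, sq_abs,
    show 2 * (S.card * ((b - a) ^ 2 / 2 ^ 2)) = S.card * (b - a) ^ 2 / 2 by ring,
    div_div_eq_mul_div]
  ring

lemma measure_mean_ge_add_sqrt_log_le {z : ι → Ω → ℝ} (hindep : iIndepFun z μ)
    (hmeas : ∀ i, AEMeasurable (z i) μ) (hz : ∀ i, ∀ᵐ ω ∂μ, z i ω ∈ Set.Icc 0 1) {p : ℝ}
    (hp : ∀ i, μ[z i] = p) {S : Finset ι} (hS : S.Nonempty) {δ : ℝ} (hδ0 : 0 < δ)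
    (hδ1 : δ ≤ 1) :
    μ {ω | p + Real.sqrt (Real.log (1 / δ) / (2 * S.card)) ≤ (1 / S.card) * ∑ i ∈ S, z i ω}
      ≤ ENNReal.ofReal δ := by
  set n : ℝ := (S.card : ℝ)
  have hn : 0 < n := by simp [n, hS.card_pos]
  set L := Real.log (1 / δ) with hLdef
  have hL : 0 ≤ L := Real.log_nonneg (by rw [le_div_iff₀ hδ0]; linarith)
  have hdev : 0 ≤ n * Real.sqrt (L / (2 * n)) := by positivity
  have hevent : {ω | p + Real.sqrt (L / (2 * n)) ≤ (1 / n) * ∑ i ∈ S, z i ω}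
      = {ω | n * Real.sqrt (L / (2 * n)) ≤ ∑ i ∈ S, (z i ω - μ[z i])} := by
    ext ω
    simp only [Set.mem_ofPred_eq, hp, Finset.sum_sub_distrib, Finset.sum_const, nsmul_eq_mul]
    rw [one_div_mul_eq_div, le_div_iff₀ hn]
    constructor <;> intro h <;> linarith
  have hexp : -2 * (n * Real.sqrt (L / (2 * n))) ^ 2 / n = -L := by
    rw [mul_pow, Real.sq_sqrt (by positivity)]
    field_simp
  have hδL : Real.exp (-L) = δ := by
    rw [hLdef, one_div, Real.log_inv, neg_neg, Real.exp_log hδ0]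
  have htail := measureReal_sum_sub_integral_ge_le hindep hmeas hz S hdev
  rw [sub_zero, one_pow, mul_one, hexp, hδL] at htail
  rw [hevent, ← ENNReal.ofReal_toReal (measure_ne_top μ _)]
  exact ENNReal.ofReal_le_ofReal htail

end Hoeffding

theorem ocp_iid_corruption_miscoverage_general
    {Ω : Type*} [MeasurableSpace Ω] (μ : Measure Ω) [IsProbabilityMeasure μ]
    (B η α p δ : ℝ) (T : ℕ) (s : ℕ → ℝ) (z r e ebar : ℕ → Ω → ℝ)
    (hη : 0 < η) (hα : α ∈ Set.Icc (0 : ℝ) 1)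
    (hp : 0 ≤ p ∧ p < 1 / 2) (hδ : 0 < δ ∧ δ < 1) (hT : 1 ≤ T)
    (hs : ∀ t, s t ∈ Set.Icc (0 : ℝ) B)
    (hmeas : ∀ t, Measurable (z t))
    (hz01 : ∀ t ω, z t ω = 0 ∨ z t ω = 1)
    (hber : ∀ t, μ {ω | z t ω = 1} = ENNReal.ofReal p)
    (hindep : iIndepFun z μ)
    (he : ∀ t ω, e t ω = if r t ω < s t then (1 : ℝ) else 0)
    (hebar : ∀ t ω, ebar t ω = |e t ω - z t ω|)
    (hr1 : ∀ ω, r 1 ω = 0)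
    (hrec : ∀ t, 1 ≤ t → ∀ ω, r (t + 1) ω = r t ω - η * (α - ebar t ω)) :
    ENNReal.ofReal (1 - δ) ≤
      μ {ω | |α - (1 / (T : ℝ)) * ∑ t ∈ Finset.Icc 1 T, e t ω|
        ≤ (B + η) / (η * T)
          + 2 * (p + Real.sqrt (Real.log (1 / δ) / (2 * T)))} := by
  obtain ⟨hδ0, hδ1⟩ := hδ
  have hz : ∀ t ω, z t ω ∈ Set.Icc (0 : ℝ) 1 := fun t ω => by
    rcases hz01 t ω with h | h <;> simp [h]
  have hmean : ∀ t, μ[z t] = p := fun t => by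
    rw [integral_eq_measureReal_of_eq_zero_or_eq_one (hmeas t) (hz01 t), measureReal_def,
      hber, ENNReal.toReal_ofReal hp.1]
  have htail := measure_mean_ge_add_sqrt_log_le hindep (fun t => (hmeas t).aemeasurable)
    (fun t => ae_of_all _ (hz t)) hmean (S := Finset.Icc 1 T) ⟨1, by simpa using hT⟩ hδ0 hδ1.le
  rw [Nat.card_Icc, add_tsub_cancel_right] at htail
  refine ofReal_one_sub_le_measure hδ0.le ((measure_mono fun ω hω => ?_).trans htail)
  have hmiscov := ocp_miscoverage_le hη hα hs (hz · ω) (he · ω) (hebar · ω) (hr1 ω)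
    (fun t ht => hrec t ht ω) hT
  simp only [Set.mem_compl_iff, Set.mem_ofPred_eq, not_le] at hω ⊢
  linarith

/-- Corollary 1: OCP under i.i.d. Bernoulli(p) feedback corruption:
with probability at least 1 - δ,
MisCov(T) ≤ (B+η)/(ηT) + 2(p + sqrt(log(1/δ)/(2T))). -/
theorem ocp_iid_corruption_miscoverage
    {Ω : Type*} [MeasurableSpace Ω] (μ : Measure Ω) [IsProbabilityMeasure μ]
    (B η α p δ : ℝ) (T : ℕ) (s : ℕ → ℝ) (z r e ebar : ℕ → Ω → ℝ)
    (hB : 0 < B) (hη : 0 < η) (hα : α ∈ Set.Icc (0 : ℝ) 1)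
    (hp : 0 ≤ p ∧ p < 1 / 2) (hδ : 0 < δ ∧ δ < 1) (hT : 1 ≤ T)
    (hs : ∀ t, s t ∈ Set.Icc (0 : ℝ) B)
    (hmeas : ∀ t, Measurable (z t))
    (hz01 : ∀ t ω, z t ω = 0 ∨ z t ω = 1)
    (hber : ∀ t, μ {ω | z t ω = 1} = ENNReal.ofReal p)
    (hindep : iIndepFun z μ)
    (he : ∀ t ω, e t ω = if r t ω < s t then (1 : ℝ) else 0)
    (hebar : ∀ t ω, ebar t ω = |e t ω - z t ω|)
    (hr1 : ∀ ω, r 1 ω = 0)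
    (hrec : ∀ t, 1 ≤ t → ∀ ω, r (t + 1) ω = r t ω - η * (α - ebar t ω)) :
    ENNReal.ofReal (1 - δ) ≤
      μ {ω | |α - (1 / (T : ℝ)) * ∑ t ∈ Finset.Icc 1 T, e t ω|
        ≤ (B + η) / (η * T)
          + 2 * (p + Real.sqrt (Real.log (1 / δ) / (2 * T)))} :=
  ocp_iid_corruption_miscoverage_general μ B η α p δ T s z r e ebar hη hα hp hδ hT hs hmeas hz01
    hber hindep he hebar hr1 hrec
end
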